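/- arXiv:2309.05318 — 3 statements merged into one kernel-verified Lean document; each statement's English description precedes it below -/
import Mathlib

section
/- Let A be an associative unital ring, J₊ ⊆ A a left ideal, J₋ ⊆ A a right ideal, and ℘ ∈ A an element satisfying ℘² = ℘, 1 − ℘ ∈ J₊ ∩ J₋, x℘ = 0 for every x ∈ J₊, and ℘y = 0 for every y ∈ J₋. Then A decomposes as an internal direct sum of additive groups A = (J₋ + J₊) ⊕ ℘A℘, i.e. (J₋ + J₊) ∩ ℘A℘ = {0} and (J₋ + J₊) + ℘A℘ = A; consequently the quotient map induces an additive-group isomorphism ℘A℘ ≅ A/(J₋ + J₊). -/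
/-!
Every `a` splits as `a = ((1 - ℘) a + ℘ a (1 - ℘)) + ℘ a ℘`, the first summand lying in `J₋ + J₊`.
Conversely, sandwiching between two copies of `℘` kills `J₋ + J₊` (since `℘ J₋ = 0 = J₊ ℘`)
and fixes `℘A℘` (since `℘² = ℘`), so the two summands meet only in `0`.
-/

theorem QuotientAddGroup.bijective_mk_restrict_of_isCompl {G : Type*} [AddCommGroup G]
    {K S : AddSubgroup G} (hKS : IsCompl K S) :
    Function.Bijective (fun s : S => (QuotientAddGroup.mk (s : G) : G ⧸ K)) := by
  constructor
  · rintro ⟨s₁, hs₁⟩ ⟨s₂, hs₂⟩ h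
    have hK : -s₁ + s₂ ∈ K := (QuotientAddGroup.eq ..).mp h
    have hS : -s₁ + s₂ ∈ S := S.add_mem (S.neg_mem hs₁) hs₂
    have hzero : -s₁ + s₂ = 0 := AddSubgroup.disjoint_def.mp hKS.disjoint hK hS
    exact Subtype.ext (neg_add_eq_zero.mp hzero)
  · intro q
    induction q using QuotientAddGroup.induction_on with
    | H g =>
      obtain ⟨k, hk, s, hs, rfl⟩ := AddSubgroup.mem_sup.mp (hKS.sup_eq_top ▸ AddSubgroup.mem_top g)
      refine ⟨⟨s, hs⟩, (QuotientAddGroup.eq ..).mpr ?_⟩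
      simpa [add_comm k s] using hk

section Corner

variable {A : Type*} [Ring A]

def corner (p : A) : AddSubgroup A where
  carrier := {y | ∃ a : A, y = p * a * p}
  zero_mem' := ⟨0, by simp⟩
  add_mem' := by
    rintro _ _ ⟨a, rfl⟩ ⟨b, rfl⟩
    exact ⟨a + b, by noncomm_ring⟩
  neg_mem' := by
    rintro _ ⟨a, rfl⟩
    exact ⟨-a, by noncomm_ring⟩

variable {Jplus Jminus : AddSubgroup A} {p : A}

theorem mul_mul_eq_zero_of_mem_sup (hannp : ∀ x ∈ Jplus, x * p = 0)
    (hannm : ∀ y ∈ Jminus, p * y = 0) {z : A} (hz : z ∈ Jminus ⊔ Jplus) : p * z * p = 0 := by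
  obtain ⟨y, hy, x, hx, rfl⟩ := AddSubgroup.mem_sup.mp hz
  rw [mul_add, add_mul, hannm y hy, zero_mul, zero_add, mul_assoc, hannp x hx, mul_zero]

theorem sub_mul_mul_mem_sup (hleft : ∀ a : A, ∀ x ∈ Jplus, a * x ∈ Jplus)
    (hright : ∀ y ∈ Jminus, ∀ a : A, y * a ∈ Jminus)
    (honep : (1 : A) - p ∈ Jplus) (honem : (1 : A) - p ∈ Jminus) (a : A) :
    a - p * a * p ∈ Jminus ⊔ Jplus := by
  have hsplit : a - p * a * p = (1 - p) * a + p * a * (1 - p) := by noncomm_ring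
  rw [hsplit]
  exact add_mem (AddSubgroup.mem_sup_left (hright _ honem a))
    (AddSubgroup.mem_sup_right (hleft _ _ honep))

theorem isCompl_sup_corner (hleft : ∀ a : A, ∀ x ∈ Jplus, a * x ∈ Jplus)
    (hright : ∀ y ∈ Jminus, ∀ a : A, y * a ∈ Jminus) (hidem : p * p = p)
    (honep : (1 : A) - p ∈ Jplus) (honem : (1 : A) - p ∈ Jminus)
    (hannp : ∀ x ∈ Jplus, x * p = 0) (hannm : ∀ y ∈ Jminus, p * y = 0) :
    IsCompl (Jminus ⊔ Jplus) (corner p) := by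
  constructor
  · rw [AddSubgroup.disjoint_def]
    rintro _ hz ⟨a, rfl⟩
    calc p * a * p = (p * p) * a * (p * p) := by rw [hidem]
      _ = p * (p * a * p) * p := by noncomm_ring
      _ = 0 := mul_mul_eq_zero_of_mem_sup hannp hannm hz
  · rw [codisjoint_iff, eq_top_iff]
    intro a _
    rw [← sub_add_cancel a (p * a * p)]
    exact add_mem (AddSubgroup.mem_sup_left (sub_mul_mul_mem_sup hleft hright honep honem a))
      (AddSubgroup.mem_sup_right ⟨a, rfl⟩)

end Corner

/-- Let `A` be an associative unital ring, `J₊ ⊆ A` a left ideal and `J₋ ⊆ A` a right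
ideal (formalized as additive subgroups with `A * J₊ ⊆ J₊` and `J₋ * A ⊆ J₋`), and
`℘ ∈ A` an element with `℘² = ℘`, `1 - ℘ ∈ J₊ ∩ J₋`, `x ℘ = 0` for all `x ∈ J₊`,
and `℘ y = 0` for all `y ∈ J₋`.  Then `A = (J₋ + J₊) ⊕ ℘A℘` as additive groups:
`(J₋ + J₊) ∩ ℘A℘ = {0}` and `(J₋ + J₊) + ℘A℘ = A`; consequently the quotient map
induces an additive-group isomorphism `℘A℘ ≅ A/(J₋ + J₊)` (the restriction of the
quotient map to `℘A℘` is bijective). -/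
theorem extremal_projector_double_coset_decomposition
    (A : Type*) [Ring A] (Jplus Jminus : AddSubgroup A)
    (hleft : ∀ a : A, ∀ x ∈ Jplus, a * x ∈ Jplus)
    (hright : ∀ y ∈ Jminus, ∀ a : A, y * a ∈ Jminus)
    (p : A) (hidem : p * p = p)
    (honep : (1 : A) - p ∈ Jplus) (honem : (1 : A) - p ∈ Jminus)
    (hannp : ∀ x ∈ Jplus, x * p = 0) (hannm : ∀ y ∈ Jminus, p * y = 0) :
    (∀ z ∈ Jminus ⊔ Jplus, (∃ a : A, z = p * a * p) → z = 0) ∧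
    (∀ a : A, ∃ z ∈ Jminus ⊔ Jplus, ∃ b : A, a = z + p * b * p) ∧
    Function.Bijective
      (fun y : {y : A // ∃ a : A, y = p * a * p} =>
        (QuotientAddGroup.mk y.val : A ⧸ (Jminus ⊔ Jplus))) := by
  have hcompl := isCompl_sup_corner hleft hright hidem honep honem hannp hannm
  refine ⟨fun z hz hcorner => AddSubgroup.disjoint_def.mp hcompl.disjoint hz hcorner,
    fun a => ?_, QuotientAddGroup.bijective_mk_restrict_of_isCompl hcompl⟩
  obtain ⟨z, hz, _, ⟨b, rfl⟩, hab⟩ :=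
    AddSubgroup.mem_sup.mp (hcompl.sup_eq_top ▸ AddSubgroup.mem_top a)
  exact ⟨z, hz, b, hab.symm⟩
end

section
/- Let (P, ≤) be a partially ordered set and fix i, j ∈ P. Call a finite subset C ⊆ P a route from j to i if C is nonempty and totally ordered (a chain), i and j belong to C, and every c ∈ C satisfies j ≤ c ≤ i. Fix l, r ∈ P with r < l and such that no x ∈ P satisfies r < x < l. Call a route C (l,r)-fillable if C ∩ {l,r} ≠ ∅ and C ∪ {l,r} is again a route from j to i. Then: (1) the relation on (l,r)-fillable routes given by C ∼ C′ iff C \ {l,r} = C′ \ {l,r} is an equivalence relation whose equivalence classes are exactly the nonempty sets of the form {D ∪ {l}, D ∪ {r}, D ∪ {l,r}} ∩ {(l,r)-fillable routes} with D = C \ {l,r}; hence every route from j to i is either not (l,r)-fillable or belongs to exactly one such class; (2) the class of a fillable route C with D = C \ {l,r} has exactly 3 elements, namely D ∪ {l}, D ∪ {r}, D ∪ {l,r}, if l ≠ i and r ≠ j; exactly 2 elements, namely D ∪ {l} and D ∪ {l,r}, if l = i and r ≠ j; exactly 2 elements, namely D ∪ {r} and D ∪ {l,r}, if l ≠ i and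 r = j; and exactly 1 element, namely D ∪ {l,r}, if l = i and r = j. -/
/-!
A fillable route `C` is determined by `D = C \ {l, r}` and the nonempty part `C ∩ {l, r}`,
and each of the three candidates `D ∪ {l}`, `D ∪ {r}`, `D ∪ {l, r}` lies inside the route
`C ∪ {l, r}`. A subset of a route is a route as soon as it contains both endpoints, so a
candidate is fillable exactly when it contains `i` and `j`. Since `j ≤ r < l ≤ i`, the set
`D ∪ {l}` always contains `i` and contains `j` iff `r ≠ j`; symmetrically `D ∪ {r}` always
contains `j` and contains `i` iff `l ≠ i`.
-/

/-- A finite subset `C` of a poset `P` is a *route* from `j` to `i` if it is a nonempty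
chain containing `i` and `j`, all of whose elements `c` satisfy `j ≤ c ≤ i`. -/
def IsRoute {P : Type*} [PartialOrder P] (i j : P) (C : Finset P) : Prop :=
  C.Nonempty ∧ (∀ a ∈ C, ∀ b ∈ C, a ≤ b ∨ b ≤ a) ∧ i ∈ C ∧ j ∈ C ∧
    ∀ c ∈ C, j ≤ c ∧ c ≤ i

/-- A route `C` from `j` to `i` is *(l,r)-fillable* if `C ∩ {l,r} ≠ ∅` and
`C ∪ {l,r}` is again a route from `j` to `i`. -/
def IsFillable {P : Type*} [PartialOrder P] [DecidableEq P]
    (i j l r : P) (C : Finset P) : Prop :=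
  IsRoute i j C ∧ (l ∈ C ∨ r ∈ C) ∧ IsRoute i j (C ∪ {l, r})

/-- The equivalence class (chain) of an `(l,r)`-fillable route `C`: all fillable routes
`C'` with `C' \ {l,r} = C \ {l,r}`. -/
def routeClass {P : Type*} [PartialOrder P] [DecidableEq P]
    (i j l r : P) (C : Finset P) : Set (Finset P) :=
  {C' : Finset P | IsFillable i j l r C' ∧ C' \ {l, r} = C \ {l, r}}

namespace Finset

variable {α : Type*} [DecidableEq α]

theorem sdiff_union_union_of_subset {s t u : Finset α} (h : u ⊆ t) :
    s \ t ∪ u ∪ t = s ∪ t := by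
  ext a
  have := @h a
  simp only [mem_union, mem_sdiff] at this ⊢
  tauto

theorem sdiff_union_sdiff_of_subset {s t u : Finset α} (h : u ⊆ t) :
    (s \ t ∪ u) \ t = s \ t := by
  ext a
  have := @h a
  simp only [mem_union, mem_sdiff] at this ⊢
  tauto

theorem sdiff_pair_union_ne {a b : α} (hab : a ≠ b) (s : Finset α) :
    s \ {a, b} ∪ {a} ≠ s \ {a, b} ∪ {b} ∧ s \ {a, b} ∪ {a} ≠ s \ {a, b} ∪ {a, b} ∧
      s \ {a, b} ∪ {b} ≠ s \ {a, b} ∪ {a, b} :=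
  ⟨ne_of_mem_of_not_mem' (a := a) (by simp) (by simp [hab]),
    (ne_of_mem_of_not_mem' (a := b) (by simp) (by simp [hab.symm])).symm,
    (ne_of_mem_of_not_mem' (a := a) (by simp) (by simp [hab])).symm⟩

end Finset

section Route

variable {P : Type*} [PartialOrder P]

theorem IsRoute.mono {i j : P} {A B : Finset P} (hB : IsRoute i j B) (hAB : A ⊆ B)
    (hi : i ∈ A) (hj : j ∈ A) : IsRoute i j A :=
  ⟨⟨i, hi⟩, fun a ha b hb => hB.2.1 a (hAB ha) b (hAB hb), hi, hj,
    fun c hc => hB.2.2.2.2 c (hAB hc)⟩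

variable [DecidableEq P] {i j l r : P}

theorem isFillable_iff {C : Finset P} :
    IsFillable i j l r C ↔
      (l ∈ C ∨ r ∈ C) ∧ IsRoute i j (C ∪ {l, r}) ∧ i ∈ C ∧ j ∈ C :=
  ⟨fun ⟨hC, hlr, hU⟩ => ⟨hlr, hU, hC.2.2.1, hC.2.2.2.1⟩,
    fun ⟨hlr, hU, hi, hj⟩ => ⟨hU.mono Finset.subset_union_left hi hj, hlr, hU⟩⟩

theorem routeClass_eq_of_mem {C C' : Finset P} (h : C ∈ routeClass i j l r C') :
    routeClass i j l r C' = routeClass i j l r C := by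
  simp only [routeClass, h.2]

theorem eq_sdiff_pair_union_of_mem_routeClass {C X : Finset P}
    (hX : X ∈ routeClass i j l r C) :
    (X = C \ {l, r} ∪ {l} ∧ r ≠ j) ∨ (X = C \ {l, r} ∪ {r} ∧ l ≠ i) ∨
      X = C \ {l, r} ∪ {l, r} := by
  obtain ⟨hX, hD⟩ := hX
  obtain ⟨hlX, -, hiX, hjX⟩ := isFillable_iff.mp hX
  rw [← hD]
  by_cases hl : l ∈ X <;> by_cases hr : r ∈ X <;>
    simp only [Finset.ext_iff, Finset.mem_union, Finset.mem_sdiff, Finset.mem_insert,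
      Finset.mem_singleton] <;> grind

theorem sdiff_pair_union_mem_routeClass {C S : Finset P}
    (hC : IsFillable i j l r C) (hS : S ⊆ {l, r}) (hSl : l ∈ S ∨ r ∈ S)
    (hi : i ∈ C \ {l, r} ∪ S) (hj : j ∈ C \ {l, r} ∪ S) :
    C \ {l, r} ∪ S ∈ routeClass i j l r C := by
  refine ⟨isFillable_iff.mpr ⟨?_, ?_, hi, hj⟩, Finset.sdiff_union_sdiff_of_subset hS⟩
  · exact hSl.imp (Finset.mem_union_right _) (Finset.mem_union_right _)
  · rw [Finset.sdiff_union_union_of_subset hS]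
    exact hC.2.2

theorem mem_routeClass_iff (hlr : r < l) {C X : Finset P} (hC : IsFillable i j l r C) :
    X ∈ routeClass i j l r C ↔
      (X = C \ {l, r} ∪ {l} ∧ r ≠ j) ∨ (X = C \ {l, r} ∪ {r} ∧ l ≠ i) ∨
        X = C \ {l, r} ∪ {l, r} := by
  refine ⟨eq_sdiff_pair_union_of_mem_routeClass, ?_⟩
  have hU := hC.2.2
  have hi : i ∈ C ∪ {l, r} := hU.2.2.1
  have hj : j ∈ C ∪ {l, r} := hU.2.2.2.1
  have hri : r ≠ i := (hlr.trans_le (hU.2.2.2.2 l (by simp)).2).ne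
  have hlj : l ≠ j := ((hU.2.2.2.2 r (by simp)).1.trans_lt hlr).ne'
  simp only [Finset.mem_union, Finset.mem_insert, Finset.mem_singleton] at hi hj
  rintro (⟨rfl, hrj⟩ | ⟨rfl, hli⟩ | rfl) <;>
    refine sdiff_pair_union_mem_routeClass hC (by simp) (by simp) ?_ ?_ <;> simp <;> grind

end Route

theorem route_chain_classification_general
    {P : Type*} [PartialOrder P] [DecidableEq P] (i j l r : P)
    (hlr : r < l) :
    (Equivalence (fun C C' : {C : Finset P // IsFillable i j l r C} =>
        C.val \ {l, r} = C'.val \ {l, r})) ∧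
    (∀ C : Finset P, IsFillable i j l r C →
        C ∈ routeClass i j l r C ∧
        routeClass i j l r C ⊆
          {C \ {l, r} ∪ {l}, C \ {l, r} ∪ {r}, C \ {l, r} ∪ {l, r}}) ∧
    (∀ C : Finset P, IsRoute i j C →
        ¬ IsFillable i j l r C ∨
        (C ∈ routeClass i j l r C ∧
          ∀ C' : Finset P, IsFillable i j l r C' → C ∈ routeClass i j l r C' →
            routeClass i j l r C' = routeClass i j l r C)) ∧
    (∀ C : Finset P, IsFillable i j l r C →
      (l ≠ i → r ≠ j →
        routeClass i j l r C
            = {C \ {l, r} ∪ {l}, C \ {l, r} ∪ {r}, C \ {l, r} ∪ {l, r}} ∧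
        (routeClass i j l r C).ncard = 3) ∧
      (l = i → r ≠ j →
        routeClass i j l r C = {C \ {l, r} ∪ {l}, C \ {l, r} ∪ {l, r}} ∧
        (routeClass i j l r C).ncard = 2) ∧
      (l ≠ i → r = j →
        routeClass i j l r C = {C \ {l, r} ∪ {r}, C \ {l, r} ∪ {l, r}} ∧
        (routeClass i j l r C).ncard = 2) ∧
      (l = i → r = j →
        routeClass i j l r C = {C \ {l, r} ∪ {l, r}} ∧
        (routeClass i j l r C).ncard = 1)) := by
  refine ⟨⟨fun _ => rfl, fun h => h.symm, fun h₁ h₂ => h₁.trans h₂⟩,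
    fun C hC => ⟨⟨hC, rfl⟩, fun X hX => ?_⟩,
    fun C _ => (em _).symm.imp_right fun hC => ⟨⟨hC, rfl⟩, fun _ _ h => routeClass_eq_of_mem h⟩,
    fun C hC => ?_⟩
  · rcases eq_sdiff_pair_union_of_mem_routeClass hX with ⟨rfl, -⟩ | ⟨rfl, -⟩ | rfl <;> simp
  obtain ⟨hlr', hl, hr⟩ := Finset.sdiff_pair_union_ne hlr.ne' C
  have hclass := fun X => mem_routeClass_iff (X := X) hlr hC
  refine ⟨fun hli hrj => ?_, fun hli hrj => ?_, fun hli hrj => ?_, fun hli hrj => ?_⟩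
  · have h : routeClass i j l r C = {C \ {l, r} ∪ {l}, C \ {l, r} ∪ {r}, C \ {l, r} ∪ {l, r}} :=
      Set.ext fun X => by rw [hclass]; simp [hli, hrj]
    exact ⟨h, h ▸ Set.ncard_eq_three.mpr ⟨_, _, _, hlr', hl, hr, rfl⟩⟩
  · have h : routeClass i j l r C = {C \ {l, r} ∪ {l}, C \ {l, r} ∪ {l, r}} :=
      Set.ext fun X => by rw [hclass]; simp [hli, hrj]
    exact ⟨h, h ▸ Set.ncard_pair hl⟩
  · have h : routeClass i j l r C = {C \ {l, r} ∪ {r}, C \ {l, r} ∪ {l, r}} :=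
      Set.ext fun X => by rw [hclass]; simp [hli, hrj]
    exact ⟨h, h ▸ Set.ncard_pair hr⟩
  · have h : routeClass i j l r C = {C \ {l, r} ∪ {l, r}} :=
      Set.ext fun X => by rw [hclass]; simp [hli, hrj]
    exact ⟨h, h ▸ Set.ncard_singleton _⟩

/-- Fix `i, j` in a poset `P` and `l, r ∈ P` with `r < l` and no element strictly between.
(1) The relation `C ∼ C' ↔ C \ {l,r} = C' \ {l,r}` on `(l,r)`-fillable routes from `j`
to `i` is an equivalence relation; each class of a fillable route `C` is contained in
`{D ∪ {l}, D ∪ {r}, D ∪ {l,r}}` where `D = C \ {l,r}` and contains `C`, so every route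
from `j` to `i` is either not fillable or belongs to exactly one such class.
(2) The class of a fillable route `C` has exactly 3 elements `D∪{l}, D∪{r}, D∪{l,r}`
if `l ≠ i` and `r ≠ j`; exactly 2 elements `D∪{l}, D∪{l,r}` if `l = i ∧ r ≠ j`;
exactly 2 elements `D∪{r}, D∪{l,r}` if `l ≠ i ∧ r = j`; and exactly 1 element
`D∪{l,r}` if `l = i ∧ r = j`. -/
theorem route_chain_classification
    {P : Type*} [PartialOrder P] [DecidableEq P] (i j l r : P)
    (hlr : r < l) (hcov : ∀ x : P, ¬(r < x ∧ x < l)) :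
    (Equivalence (fun C C' : {C : Finset P // IsFillable i j l r C} =>
        C.val \ {l, r} = C'.val \ {l, r})) ∧
    (∀ C : Finset P, IsFillable i j l r C →
        C ∈ routeClass i j l r C ∧
        routeClass i j l r C ⊆
          {C \ {l, r} ∪ {l}, C \ {l, r} ∪ {r}, C \ {l, r} ∪ {l, r}}) ∧
    (∀ C : Finset P, IsRoute i j C →
        ¬ IsFillable i j l r C ∨
        (C ∈ routeClass i j l r C ∧
          ∀ C' : Finset P, IsFillable i j l r C' → C ∈ routeClass i j l r C' →
            routeClass i j l r C' = routeClass i j l r C)) ∧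
    (∀ C : Finset P, IsFillable i j l r C →
      (l ≠ i → r ≠ j →
        routeClass i j l r C
            = {C \ {l, r} ∪ {l}, C \ {l, r} ∪ {r}, C \ {l, r} ∪ {l, r}} ∧
        (routeClass i j l r C).ncard = 3) ∧
      (l = i → r ≠ j →
        routeClass i j l r C = {C \ {l, r} ∪ {l}, C \ {l, r} ∪ {l, r}} ∧
        (routeClass i j l r C).ncard = 2) ∧
      (l ≠ i → r = j →
        routeClass i j l r C = {C \ {l, r} ∪ {r}, C \ {l, r} ∪ {l, r}} ∧
        (routeClass i j l r C).ncard = 2) ∧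
      (l = i → r = j →
        routeClass i j l r C = {C \ {l, r} ∪ {l, r}} ∧
        (routeClass i j l r C).ncard = 1)) :=
  route_chain_classification_general i j l r hlr
end

section
/- Let k be a field, H a bialgebra over k with comultiplication Δ and counit ε, A an associative unital k-algebra, ι : H → A a k-algebra homomorphism, J ⊆ A a left ideal, n a positive integer, and π : H → Mat_n(k) a k-algebra homomorphism. For u ∈ H define the matrix M(u) ∈ Mat_n(A) as the image of Δ(u) ∈ H ⊗ H under the linear map sending x ⊗ y to the matrix with entries π(x)_{ab}·ι(y), i.e. M(u)_{ab} = Σ π(u⁽¹⁾)_{ab} ι(u⁽²⁾) in Sweedler notation. Let G ⊆ H be a subset, ψ₁, …, ψ_n ∈ A, and S ∈ Mat_n(A), and assume that for every u ∈ G: (i) ι(u)·ψ_i = Σ_j ψ_j·M(u)_{ji} for all i, and (ii) every entry of the matrix M(u)·S − ε(u)·S lies in J. Then the elements Z_i = Σ_j ψ_j·S_{ji} satisfy ι(u)·Z_i − ε(u)·Z_i ∈ J for every u ∈ G and every i; that is, the components of the vector Z = ψ·S represent elements of A/J annihilated by ι(u) − ε(u) for all u ∈ G. -/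
open TensorProduct in
/-- For a bialgebra `H` over `k`, an algebra map `ι : H → A`, and a linear map
`π : H → Mat_n(k)`, the matrix `M(u) ∈ Mat_n(A)` with entries
`M(u)_{ab} = Σ π(u⁽¹⁾)_{ab} • ι(u⁽²⁾)` (Sweedler notation), i.e. the image of
`Δ(u)` under the linear map sending `x ⊗ y` to the matrix `(π(x)_{ab} • ι(y))_{ab}`. -/
noncomputable def sweedlerMatrix (k : Type*) [CommRing k] {H : Type*} [Ring H]
    [Bialgebra k H] {A : Type*} [Ring A] [Algebra k A] (ι : H →ₐ[k] A) {n : ℕ}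
    (π : H →ₗ[k] Matrix (Fin n) (Fin n) k) (u : H) : Matrix (Fin n) (Fin n) A :=
  TensorProduct.lift
    (LinearMap.mk₂ k (fun x y => Matrix.of fun a b => π x a b • ι y)
      (fun x₁ x₂ y => by
        ext a b
        simp only [Matrix.of_apply, Matrix.add_apply, map_add, add_smul])
      (fun c x y => by
        ext a b
        simp only [Matrix.of_apply, Matrix.smul_apply, map_smul]
        rw [smul_assoc])
      (fun x y₁ y₂ => by
        ext a b
        simp only [Matrix.of_apply, Matrix.add_apply, map_add, smul_add])
      (fun c x y => by
        ext a b
        simp only [Matrix.of_apply, Matrix.smul_apply, map_smul]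
        rw [smul_comm]))
    (Coalgebra.comul u)

/-- Let `H` be a bialgebra over a field `k`, `ι : H → A` an algebra map into an associative
unital `k`-algebra `A`, `J ⊆ A` a left ideal, `π : H → Mat_n(k)` an algebra map, `G ⊆ H`
a subset, `ψ₁, …, ψ_n ∈ A` and `S ∈ Mat_n(A)`.  Assume for every `u ∈ G`:
(i) `ι(u) ψ_i = Σ_j ψ_j M(u)_{ji}` (quasi-invariance of the Mickelsson generator), and
(ii) all entries of `M(u) S - ε(u) S` lie in `J` (Shapovalov-matrix property).
Then the components `Z_i = Σ_j ψ_j S_{ji}` of `Z = ψ S` satisfy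
`ι(u) Z_i - ε(u) Z_i ∈ J` for all `u ∈ G` and all `i`. -/
theorem mickelsson_elements_from_left_shapovalov
    (k : Type*) [Field k] (H : Type*) [Ring H] [Bialgebra k H]
    (A : Type*) [Ring A] [Algebra k A] (ι : H →ₐ[k] A) (J : Submodule A A)
    (n : ℕ) (hn : 0 < n) (π : H →ₐ[k] Matrix (Fin n) (Fin n) k)
    (G : Set H) (ψ : Fin n → A) (S : Matrix (Fin n) (Fin n) A)
    (hψ : ∀ u ∈ G, ∀ i : Fin n,
      ι u * ψ i = ∑ j : Fin n, ψ j * sweedlerMatrix k ι π.toLinearMap u j i)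
    (hS : ∀ u ∈ G, ∀ a b : Fin n,
      (sweedlerMatrix k ι π.toLinearMap u * S - Coalgebra.counit (R := k) u • S) a b ∈ J) :
    ∀ u ∈ G, ∀ i : Fin n,
      ι u * (∑ j : Fin n, ψ j * S j i)
        - Coalgebra.counit (R := k) u • (∑ j : Fin n, ψ j * S j i) ∈ J := by
  intro u hu i
  have key : ι u * (∑ j : Fin n, ψ j * S j i)
      - Coalgebra.counit (R := k) u • (∑ j : Fin n, ψ j * S j i)
      = ∑ l : Fin n, ψ l *
        ((sweedlerMatrix k ι π.toLinearMap u * S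
          - Coalgebra.counit (R := k) u • S) l i) := by
    rw [Finset.mul_sum, Finset.smul_sum]
    simp only [Matrix.sub_apply, Matrix.smul_apply, Matrix.mul_apply, mul_sub,
      Finset.mul_sum, ← mul_assoc, Finset.sum_sub_distrib]
    congr 1
    · rw [Finset.sum_comm]
      refine Finset.sum_congr rfl fun j _ => ?_
      rw [← Finset.sum_mul, ← hψ u hu j, mul_assoc]
    · exact Finset.sum_congr rfl fun j _ => (mul_smul_comm _ _ _).symm
  rw [key]
  exact Submodule.sum_mem J fun l _ => J.smul_mem (ψ l) (hS u hu l i)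
end
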